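/- arXiv:2106.02733 — 3 statements merged into one kernel-verified Lean document; each statement's English description precedes it below -/
import Mathlib

section
/- Let N_in = sN_out for a positive integer s, and let L be the N_out × N_in subsampling matrix L_{ij} = 1 if j = si and 0 otherwise (indices mod respective sizes). If κ_{s⁻¹} is the s-dilation of a kernel κ (i.e., κ_{s⁻¹}(si) = κ(i) and κ_{s⁻¹}(j) = 0 when s ∤ j), then the circulant convolution matrices satisfy K L = L K_{s⁻¹}. -/
/-!
Subsampling is the selection matrix `P_ι i j = [j = ι i]` of the injective group homomorphism
`ι : ℤ/N_out → ℤ/(s N_out)`, `k ↦ s k`, and the hypotheses on `κ_{s⁻¹}` say that it is `κ`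
extended by zero along `ι`. For any injective homomorphism `φ` of finite abelian groups,
`circulant v * P_φ = P_φ * circulant (extend φ v 0)`: substituting `k ↦ i - k` and using
`φ (i - k) = φ i - φ k`, both `(i, j)` entries become `∑ k, [j = φ k] v (i - k)`.
-/

open Matrix

/-- The N_out × N_in subsampling matrix by integer factor s (N_in = s·N_out):
L_{ij} = 1 if j = s·i and 0 otherwise (indices mod respective sizes). -/
def subsample (Nout s : ℕ) : Matrix (ZMod Nout) (ZMod (s * Nout)) ℂ :=
  fun i j => if j = ((s * i.val : ℕ) : ZMod (s * Nout)) then 1 else 0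

theorem Function.Injective.extend_zero_apply_eq_sum {G H α : Type*} [Fintype G] [DecidableEq H]
    [AddCommMonoid α] {φ : G → H} (hφ : Function.Injective φ) (v : G → α) (x : H) :
    Function.extend φ v 0 x = ∑ k, if x = φ k then v k else 0 := by
  by_cases hx : ∃ k, φ k = x
  · obtain ⟨k, rfl⟩ := hx
    rw [hφ.extend_apply, Fintype.sum_eq_single k fun l hl => if_neg (hφ.ne hl.symm), if_pos rfl]
  · rw [Function.extend_apply' _ _ _ hx, Pi.zero_apply, Finset.sum_eq_zero]
    intro k _
    rw [if_neg fun h => hx ⟨k, h.symm⟩]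

theorem Matrix.circulant_mul_submatrix_one {G H α : Type*} [AddCommGroup G] [AddCommGroup H]
    [Fintype G] [Fintype H] [DecidableEq H] [NonAssocSemiring α] (φ : G →+ H)
    (hφ : Function.Injective φ) (v : G → α) :
    circulant v * (1 : Matrix H H α).submatrix φ id
      = (1 : Matrix H H α).submatrix φ id * circulant (Function.extend φ v 0) := by
  ext i j
  rw [← Equiv.coe_refl, one_submatrix_mul, submatrix_apply, circulant_apply,
    hφ.extend_zero_apply_eq_sum, mul_apply, ← (Equiv.subLeft i).sum_comp]
  refine Finset.sum_congr rfl fun k _ => ?_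
  simp only [Equiv.subLeft_apply, circulant_apply, sub_sub_cancel, submatrix_apply, id, one_apply,
    map_sub, Equiv.refl_apply, Equiv.refl_symm, Function.comp_apply, mul_ite, mul_one, mul_zero]
  exact if_congr sub_eq_iff_comm rfl rfl

namespace ZMod

/-- `k ↦ s k`, built with `ZMod.lift` so that additivity comes for free (see `scaleHom_apply`). -/
def scaleHom (n s : ℕ) : ZMod n →+ ZMod (s * n) :=
  lift n ⟨(s : ℤ) • Int.castAddHom (ZMod (s * n)), by simp [← Nat.cast_mul]⟩

variable {n s : ℕ} [NeZero n]

theorem scaleHom_apply (k : ZMod n) : scaleHom n s k = ((s * k.val : ℕ) : ZMod (s * n)) := by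
  conv_lhs => rw [← natCast_zmod_val k, ← Int.cast_natCast]
  rw [scaleHom, lift_coe, AddMonoidHom.smul_apply, Int.coe_castAddHom, zsmul_eq_mul]
  push_cast
  rfl

theorem val_scaleHom (k : ZMod n) : (scaleHom n s k).val = s * k.val := by
  rw [scaleHom_apply, val_natCast, Nat.mul_mod_mul_left, Nat.mod_eq_of_lt k.val_lt]

variable [NeZero s]

theorem scaleHom_injective : Function.Injective (scaleHom n s) := fun a b hab =>
  val_injective n <| Nat.eq_of_mul_eq_mul_left (NeZero.pos s) <| by
    rw [← val_scaleHom, ← val_scaleHom, hab]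

theorem exists_scaleHom_eq_of_dvd {j : ZMod (s * n)} (hj : s ∣ j.val) :
    ∃ k, scaleHom n s k = j := by
  obtain ⟨t, ht⟩ := hj
  have htn : t < n := Nat.lt_of_mul_lt_mul_left (ht ▸ j.val_lt)
  refine ⟨t, ?_⟩
  rw [scaleHom_apply, val_natCast_of_lt htn, ← ht, natCast_zmod_val]

theorem eq_extend_scaleHom {M : Type*} [Zero M] {κ : ZMod n → M} {κ' : ZMod (s * n) → M}
    (hdil : ∀ k, κ' (scaleHom n s k) = κ k) (hzero : ∀ j : ZMod (s * n), ¬ s ∣ j.val → κ' j = 0) :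
    κ' = Function.extend (scaleHom n s) κ 0 := by
  funext j
  by_cases hj : ∃ k, scaleHom n s k = j
  · obtain ⟨k, rfl⟩ := hj
    rw [scaleHom_injective.extend_apply, hdil]
  · rw [Function.extend_apply' _ _ _ hj, Pi.zero_apply]
    exact hzero j fun hdvd => hj (exists_scaleHom_eq_of_dvd hdvd)

end ZMod

theorem subsample_eq_submatrix_one (Nout s : ℕ) [NeZero Nout] :
    subsample Nout s = (1 : Matrix (ZMod (s * Nout)) (ZMod (s * Nout)) ℂ).submatrix
      (ZMod.scaleHom Nout s) id := by
  ext i j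
  simp only [subsample, submatrix_apply, one_apply, ZMod.scaleHom_apply, id, eq_comm]

/-- If κ_{s⁻¹} is the s-dilation of κ (κ_{s⁻¹}(si) = κ(i), zero at indices not
divisible by s), then the circulant convolution matrices satisfy K L = L K_{s⁻¹}. -/
theorem dilation_intertwines_circulant (Nout s : ℕ)
    [NeZero Nout] [NeZero s] [NeZero (s * Nout)]
    (κ : ZMod Nout → ℂ) (κ' : ZMod (s * Nout) → ℂ)
    (hdil : ∀ i : ZMod Nout, κ' ((s * i.val : ℕ) : ZMod (s * Nout)) = κ i)
    (hzero : ∀ j : ZMod (s * Nout), ¬ (s ∣ j.val) → κ' j = 0) :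
    Matrix.circulant κ * subsample Nout s = subsample Nout s * Matrix.circulant κ' := by
  have hext : κ' = Function.extend (ZMod.scaleHom Nout s) κ 0 :=
    ZMod.eq_extend_scaleHom (fun k => by rw [ZMod.scaleHom_apply, hdil]) hzero
  rw [subsample_eq_submatrix_one, hext]
  exact circulant_mul_submatrix_one _ ZMod.scaleHom_injective κ
end

section
/- With L the integer subsampling matrix by factor s (N_in = sN_out), dilation intertwines subsampling: for any f : ℤ/N_in → ℂ and kernel κ : ℤ/N_out → ℂ with dilation κ_{s⁻¹}, we have (Lf) ⋆ κ = L(f ⋆ κ_{s⁻¹}), where ⋆ denotes circular convolution on the respective cyclic groups. -/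
/-- Circular convolution on ℤ/M: (f ⋆ g)(n) = Σ_m f(m) g(n - m). -/
noncomputable def cconvZ {M : ℕ} [NeZero M] (f g : ZMod M → ℂ) : ZMod M → ℂ :=
  fun n => ∑ m : ZMod M, f m * g (n - m)

/-!
Multiplication by `s` embeds `ℤ/N` into `ℤ/sN` as the subgroup of multiples of `s`, and the
dilated kernel `κ'` is supported on that subgroup. In the convolution sum `∑ₘ f m κ'(si - m)`
over `ℤ/sN`, the term at `m` can only be nonzero when `si - m`, hence `m`, lies in the subgroup;
reindexing the surviving terms by `m = sk` gives `∑ₖ f(sk) κ(i - k)`, the convolution over `ℤ/N`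
of the subsampled signal.
-/

open Function

section ConvolutionSubgroup

variable {G H R : Type*} [AddCommGroup G] [AddCommGroup H] [Fintype G] [Fintype H]
  [NonUnitalNonAssocSemiring R]

theorem sum_mul_sub_eq_of_support_subset_range (φ : G →+ H) (hφ : Injective φ) (f g : H → R)
    (hg : ∀ x ∉ Set.range φ, g x = 0) (i : G) :
    ∑ m, f m * g (φ i - m) = ∑ k, f (φ k) * g (φ (i - k)) := by
  refine (Fintype.sum_of_injective φ hφ _ _ (fun m hm => ?_) (fun k => by rw [map_sub])).symm
  have hsub : φ i - m ∉ Set.range φ := fun ⟨k, hk⟩ =>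
    hm ⟨i - k, by rw [map_sub, hk, sub_sub_cancel]⟩
  rw [hg _ hsub, mul_zero]

end ConvolutionSubgroup

namespace ZMod

variable (N s : ℕ)

/-- The embedding `ℤ/N → ℤ/sN`, `k ↦ s k`. -/
def dilate : ZMod N →+ ZMod (s * N) :=
  lift N ⟨(AddMonoidHom.mulLeft (s : ZMod (s * N))).comp (Int.castAddHom _),
    by simp [← Nat.cast_mul]⟩

variable {N s} [NeZero N]

theorem dilate_apply (k : ZMod N) : dilate N s k = ((s * k.val : ℕ) : ZMod (s * N)) := by
  conv_lhs => rw [← natCast_zmod_val k, ← Int.cast_natCast]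
  rw [dilate, lift_coe]
  simp

theorem val_dilate (k : ZMod N) : (dilate N s k).val = s * k.val := by
  rw [dilate_apply, val_natCast, Nat.mul_mod_mul_left, Nat.mod_eq_of_lt k.val_lt]

variable [NeZero (s * N)]

theorem dilate_injective : Injective (dilate N s) := fun k k' h => by
  have hs : s ≠ 0 := left_ne_zero_of_mul (NeZero.ne (s * N))
  have := congrArg val h
  rw [val_dilate, val_dilate] at this
  exact val_injective N (Nat.eq_of_mul_eq_mul_left (Nat.pos_of_ne_zero hs) this)

theorem mem_range_dilate_iff (j : ZMod (s * N)) : j ∈ Set.range (dilate N s) ↔ s ∣ j.val := by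
  constructor
  · rintro ⟨k, rfl⟩
    exact ⟨k.val, val_dilate k⟩
  · rintro ⟨r, hr⟩
    have hrN : r < N := lt_of_mul_lt_mul_left (hr ▸ j.val_lt) s.zero_le
    refine ⟨r, ?_⟩
    rw [dilate_apply, val_cast_of_lt hrN, ← hr, natCast_zmod_val]

end ZMod

theorem subsample_conv_dilation_general (Nout s : ℕ)
    [NeZero Nout] [NeZero (s * Nout)]
    (f : ZMod (s * Nout) → ℂ) (κ : ZMod Nout → ℂ) (κ' : ZMod (s * Nout) → ℂ)
    (hdil : ∀ i : ZMod Nout, κ' ((s * i.val : ℕ) : ZMod (s * Nout)) = κ i)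
    (hzero : ∀ j : ZMod (s * Nout), ¬ (s ∣ j.val) → κ' j = 0) :
    cconvZ (fun i : ZMod Nout => f ((s * i.val : ℕ) : ZMod (s * Nout))) κ =
      fun i : ZMod Nout => cconvZ f κ' ((s * i.val : ℕ) : ZMod (s * Nout)) := by
  funext i
  simp only [cconvZ, ← ZMod.dilate_apply] at hdil ⊢
  rw [sum_mul_sub_eq_of_support_subset_range _ ZMod.dilate_injective f κ'
    (fun j hj => hzero j (by rwa [← ZMod.mem_range_dilate_iff]))]
  simp only [hdil]

/-- Dilation intertwines subsampling: with (Lf)(i) = f(si) the subsampling by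
integer factor s (N_in = s·N_out) and κ_{s⁻¹} the s-dilation of κ,
(Lf) ⋆ κ = L(f ⋆ κ_{s⁻¹}), convolutions taken in ℤ/N_out and ℤ/N_in respectively. -/
theorem subsample_conv_dilation (Nout s : ℕ)
    [NeZero Nout] [NeZero s] [NeZero (s * Nout)]
    (f : ZMod (s * Nout) → ℂ) (κ : ZMod Nout → ℂ) (κ' : ZMod (s * Nout) → ℂ)
    (hdil : ∀ i : ZMod Nout, κ' ((s * i.val : ℕ) : ZMod (s * Nout)) = κ i)
    (hzero : ∀ j : ZMod (s * Nout), ¬ (s ∣ j.val) → κ' j = 0) :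
    cconvZ (fun i : ZMod Nout => f ((s * i.val : ℕ) : ZMod (s * Nout))) κ =
      fun i : ZMod Nout => cconvZ f κ' ((s * i.val : ℕ) : ZMod (s * Nout)) :=
  subsample_conv_dilation_general Nout s f κ κ' hdil hzero
end

section
/- If A, B, C, D are complex matrices of compatible sizes and A F Bᵀ = C F Dᵀ holds for all matrices F, then there exists λ ∈ ℂ with A = λC and Bᵀ = λ⁻¹Dᵀ, provided C ≠ 0 and D ≠ 0. -/
/-!
Testing the identity on the matrix units `F = single j t 1` turns it into
`A ⊗ₖ B = C ⊗ₖ D`, i.e. `A i j * B k t = C i j * D k t`. Fixing an entry `(k₀, t₀)` with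
`D k₀ t₀ ≠ 0` gives `A = λ • C` with `λ = D k₀ t₀ / B k₀ t₀`, and then fixing an entry of `C`
gives `B = λ⁻¹ • D`.
-/

open Matrix Kronecker

namespace Matrix

variable {l m n p : Type*}

theorem mul_single_one_mul_transpose_apply [Fintype m] [Fintype n] [DecidableEq m]
    [DecidableEq n] {R : Type*} [CommSemiring R]
    (A : Matrix l m R) (B : Matrix p n R) (i : l) (j : m) (k : p) (t : n) :
    (A * single j t (1 : R) * Bᵀ) i k = A i j * B k t := by
  simp [mul_apply, single, ite_and, mul_comm]

theorem kronecker_eq_of_forall_mul_mul_transpose_eq [Fintype m] [Fintype n] [DecidableEq m]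
    [DecidableEq n] {R : Type*} [CommSemiring R]
    {A C : Matrix l m R} {B D : Matrix p n R}
    (h : ∀ F : Matrix m n R, A * F * Bᵀ = C * F * Dᵀ) : A ⊗ₖ B = C ⊗ₖ D := by
  ext ⟨i, k⟩ ⟨j, t⟩
  simpa only [mul_single_one_mul_transpose_apply, kroneckerMap_apply] using
    congrFun₂ (h (single j t 1)) i k

theorem exists_smul_of_kronecker_eq {K : Type*} [Field K]
    {A C : Matrix l m K} {B D : Matrix p n K} (hC : C ≠ 0) (hD : D ≠ 0)
    (h : A ⊗ₖ B = C ⊗ₖ D) : ∃ lam : K, lam ≠ 0 ∧ A = lam • C ∧ B = lam⁻¹ • D := by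
  have hAB (i j k t) : A i j * B k t = C i j * D k t := congrFun₂ h (i, k) (j, t)
  obtain ⟨i₀, j₀, hC₀⟩ : ∃ i j, C i j ≠ 0 := by simpa [← Matrix.ext_iff] using hC
  obtain ⟨k₀, t₀, hD₀⟩ : ∃ k t, D k t ≠ 0 := by simpa [← Matrix.ext_iff] using hD
  have hB₀ : B k₀ t₀ ≠ 0 :=
    right_ne_zero_of_mul (hAB i₀ j₀ k₀ t₀ ▸ mul_ne_zero hC₀ hD₀)
  set lam := D k₀ t₀ / B k₀ t₀
  have hA : A = lam • C := by
    ext i j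
    rw [smul_apply, smul_eq_mul, div_mul_eq_mul_div, eq_div_iff hB₀, hAB, mul_comm]
  have hlam : lam ≠ 0 := div_ne_zero hD₀ hB₀
  refine ⟨lam, hlam, hA, ?_⟩
  ext k t
  have hBD : C i₀ j₀ * (lam * B k t) = C i₀ j₀ * D k t := by
    rw [← hAB, hA, smul_apply, smul_eq_mul, mul_left_comm, mul_assoc]
  rw [smul_apply, smul_eq_mul, eq_inv_mul_iff_mul_eq₀ hlam]
  exact mul_left_cancel₀ hC₀ hBD

end Matrix

/-- Rank-one decoupling lemma: if A F Bᵀ = C F Dᵀ for all matrices F, with C ≠ 0 and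
D ≠ 0, then there is λ ∈ ℂ with A = λ C and Bᵀ = λ⁻¹ Dᵀ. -/
theorem rank_one_decoupling (m n p q : ℕ)
    (A C : Matrix (Fin m) (Fin n) ℂ) (B D : Matrix (Fin p) (Fin q) ℂ)
    (hC : C ≠ 0) (hD : D ≠ 0)
    (h : ∀ F : Matrix (Fin n) (Fin q) ℂ, A * F * Bᵀ = C * F * Dᵀ) :
    ∃ lam : ℂ, lam ≠ 0 ∧ A = lam • C ∧ Bᵀ = lam⁻¹ • Dᵀ := by
  obtain ⟨lam, hlam, hA, hB⟩ :=
    exists_smul_of_kronecker_eq hC hD (kronecker_eq_of_forall_mul_mul_transpose_eq h)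
  exact ⟨lam, hlam, hA, by rw [hB, transpose_smul]⟩
end
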